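/- arXiv:1305.0049 — 2 statements merged into one kernel-verified Lean document; each statement's English description precedes it below -/
import Mathlib

section
/- Let (Ω, 𝓕, P) be a probability space and T : Ω → [0, ∞) a measurable function such that P({T ≥ t}) ≤ M·e^{−α₀ t} for all t ≥ 0, where M > 0 and α₀ > 0. Then for every measurable set E ⊆ Ω, every α with 0 < α ≤ α₀/2, and every β' > 0: ∫_E exp(α T) dP ≤ e^{β'}·P(E) + (M·e^{α₀ + β'}/(1 − e^{−α₀/2}))·e^{−α₀ β'/α}. -/
/-!
With `t₀ = β'/α`, split according to `{T < t₀}` and the layers `{t₀ + k ≤ T < t₀ + k + 1}`.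
Below `t₀` the integrand is at most `e^{β'}`; on the `k`-th layer it is at most
`e^{β' + α(k+1)}`, while the layer has probability at most `M e^{-α₀(t₀+k)}`. Since
`α ≤ α₀/2`, these contributions are dominated by a geometric series of ratio `e^{-α₀/2}`.
-/

open MeasureTheory

lemma ofReal_le_add_tsum_indicator_of_monotone {f : ℝ → ℝ} (hf : Monotone f) (t₀ x : ℝ) :
    ENNReal.ofReal (f x) ≤ ENNReal.ofReal (f t₀) +
      ∑' k : ℕ, (Set.Ici (t₀ + k)).indicator (fun _ => ENNReal.ofReal (f (t₀ + k + 1))) x := by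
  rcases lt_or_ge x t₀ with hx | hx
  · exact le_add_right (ENNReal.ofReal_le_ofReal (hf hx.le))
  · set k := ⌊x - t₀⌋₊
    have hk : t₀ + k ≤ x := by linarith [Nat.floor_le (sub_nonneg.mpr hx)]
    have hk' : x ≤ t₀ + k + 1 := by linarith [Nat.lt_floor_add_one (x - t₀)]
    refine le_add_left (le_trans ?_ (ENNReal.le_tsum k))
    rw [Set.indicator_of_mem (Set.mem_Ici.mpr hk)]
    exact ENNReal.ofReal_le_ofReal (hf hk')

lemma setLIntegral_ofReal_comp_le_add_tsum {Ω : Type*} [MeasurableSpace Ω] (μ : Measure Ω)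
    {T : Ω → ℝ} (hT : Measurable T) {f : ℝ → ℝ} (hf : Monotone f) (t₀ : ℝ) (E : Set Ω) :
    ∫⁻ ω in E, ENNReal.ofReal (f (T ω)) ∂μ ≤ ENNReal.ofReal (f t₀) * μ E +
      ∑' k : ℕ, ENNReal.ofReal (f (t₀ + k + 1)) * μ {ω | t₀ + k ≤ T ω} := by
  calc ∫⁻ ω in E, ENNReal.ofReal (f (T ω)) ∂μ
      ≤ ∫⁻ ω in E, ENNReal.ofReal (f t₀) + ∑' k : ℕ,
          (Set.Ici (t₀ + k)).indicator (fun _ => ENNReal.ofReal (f (t₀ + k + 1))) (T ω) ∂μ :=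
        lintegral_mono fun ω => ofReal_le_add_tsum_indicator_of_monotone hf t₀ (T ω)
    _ ≤ ENNReal.ofReal (f t₀) * μ E + ∫⁻ ω, ∑' k : ℕ,
          (Set.Ici (t₀ + k)).indicator (fun _ => ENNReal.ofReal (f (t₀ + k + 1))) (T ω) ∂μ := by
        rw [lintegral_add_left measurable_const, setLIntegral_const]
        gcongr
        exact Measure.restrict_le_self
    _ = ENNReal.ofReal (f t₀) * μ E +
          ∑' k : ℕ, ENNReal.ofReal (f (t₀ + k + 1)) * μ {ω | t₀ + k ≤ T ω} := by
        rw [lintegral_tsum fun k => ?_]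
        · simp_rw [lintegral_indicator_const_comp hT measurableSet_Ici]
          rfl
        · exact ((measurable_const.indicator measurableSet_Ici).comp hT).aemeasurable

lemma tsum_ofReal_mul_geometric {C r : ℝ} (hC : 0 ≤ C) (hr₀ : 0 ≤ r) (hr₁ : r < 1) :
    ∑' k : ℕ, ENNReal.ofReal (C * r ^ k) = ENNReal.ofReal (C / (1 - r)) := by
  rw [← ENNReal.ofReal_tsum_of_nonneg (fun k => by positivity)
    ((summable_geometric_of_lt_one hr₀ hr₁).mul_left C), tsum_mul_left,
    tsum_geometric_of_lt_one hr₀ hr₁, div_eq_mul_inv]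

lemma tsum_ofReal_exp_mul_exp_tail_le {M α α₀ : ℝ} (hM : 0 ≤ M) (hα₀ : 0 < α₀)
    (hαα₀ : α ≤ α₀ / 2) (t₀ : ℝ) :
    ∑' k : ℕ, ENNReal.ofReal (Real.exp (α * (t₀ + k + 1))) *
        ENNReal.ofReal (M * Real.exp (-α₀ * (t₀ + k))) ≤
      ENNReal.ofReal (M * Real.exp (α * t₀ + α₀ / 2 - α₀ * t₀) / (1 - Real.exp (-α₀ / 2))) := by
  have hr₁ : Real.exp (-α₀ / 2) < 1 := Real.exp_lt_one_iff.mpr (by linarith)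
  rw [← tsum_ofReal_mul_geometric (by positivity) (Real.exp_nonneg _) hr₁]
  refine ENNReal.tsum_le_tsum fun k => ?_
  rw [← ENNReal.ofReal_mul (Real.exp_nonneg _)]
  refine ENNReal.ofReal_le_ofReal ?_
  rw [← Real.exp_nat_mul, mul_assoc, ← Real.exp_add, mul_left_comm, ← Real.exp_add]
  refine mul_le_mul_of_nonneg_left (Real.exp_le_exp.mpr ?_) hM
  nlinarith [(Nat.cast_nonneg k : (0 : ℝ) ≤ k)]

theorem integral_exp_le_of_tail_bound_general {Ω : Type*} [MeasurableSpace Ω]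
    (P : Measure Ω) [IsProbabilityMeasure P]
    (T : Ω → ℝ) (hTmeas : Measurable T)
    (M α₀ : ℝ) (hM : 0 < M) (hα₀ : 0 < α₀)
    (htail : ∀ t : ℝ, 0 ≤ t → (P {ω | t ≤ T ω}).toReal ≤ M * Real.exp (-α₀ * t))
    (E : Set Ω)
    (α : ℝ) (hα : 0 < α) (hαα₀ : α ≤ α₀ / 2) (β' : ℝ) (hβ' : 0 < β') :
    ∫ ω in E, Real.exp (α * T ω) ∂P ≤
      Real.exp β' * (P E).toReal +
        (M * Real.exp (α₀ + β') / (1 - Real.exp (-α₀ / 2))) * Real.exp (-α₀ * β' / α) := by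
  set t₀ := β' / α
  have hαt₀ : α * t₀ = β' := mul_div_cancel₀ β' hα.ne'
  have hr : 0 < 1 - Real.exp (-α₀ / 2) := sub_pos.mpr (Real.exp_lt_one_iff.mpr (by linarith))
  have htail_ofReal (k : ℕ) :
      P {ω | t₀ + k ≤ T ω} ≤ ENNReal.ofReal (M * Real.exp (-α₀ * (t₀ + k))) := by
    rw [← ENNReal.ofReal_toReal (measure_ne_top P _)]
    exact ENNReal.ofReal_le_ofReal (htail _ (by positivity))
  have hlint : ∫⁻ ω in E, ENNReal.ofReal (Real.exp (α * T ω)) ∂P ≤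
      ENNReal.ofReal (Real.exp β' * (P E).toReal +
        M * Real.exp (β' + α₀ / 2 - α₀ * t₀) / (1 - Real.exp (-α₀ / 2))) := by
    calc ∫⁻ ω in E, ENNReal.ofReal (Real.exp (α * T ω)) ∂P
        ≤ ENNReal.ofReal (Real.exp (α * t₀)) * P E + ∑' k : ℕ,
            ENNReal.ofReal (Real.exp (α * (t₀ + k + 1))) * P {ω | t₀ + k ≤ T ω} :=
          setLIntegral_ofReal_comp_le_add_tsum P hTmeas
            (fun _ _ h => Real.exp_le_exp.mpr (by gcongr)) t₀ E
      _ ≤ ENNReal.ofReal (Real.exp (α * t₀)) * P E + ENNReal.ofReal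
            (M * Real.exp (α * t₀ + α₀ / 2 - α₀ * t₀) / (1 - Real.exp (-α₀ / 2))) := by
          grw [htail_ofReal, tsum_ofReal_exp_mul_exp_tail_le hM.le hα₀ hαα₀ t₀]
      _ = _ := by
          rw [hαt₀, ENNReal.ofReal_add (by positivity) (by positivity),
            ENNReal.ofReal_mul (Real.exp_nonneg _), ENNReal.ofReal_toReal (measure_ne_top P E)]
  rw [integral_eq_lintegral_of_nonneg_ae (.of_forall fun ω => (Real.exp_pos _).le)
    (by fun_prop)]
  refine (ENNReal.toReal_le_of_le_ofReal (by positivity) hlint).trans ?_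
  rw [div_mul_eq_mul_div, mul_assoc, ← Real.exp_add]
  gcongr
  have : -α₀ * β' / α = -α₀ * t₀ := mul_div_assoc _ _ _
  linarith

/-- Quantitative truncated exponential moment bound: if `T ≥ 0` has exponential tail
`P(T ≥ t) ≤ M e^{−α₀ t}`, then for every measurable `E`, every `0 < α ≤ α₀/2` and `β' > 0`,
`∫_E exp(α T) dP ≤ e^{β'} P(E) + (M e^{α₀+β'}/(1 − e^{−α₀/2})) e^{−α₀ β'/α}`. -/
theorem integral_exp_le_of_tail_bound {Ω : Type*} [MeasurableSpace Ω]
    (P : Measure Ω) [IsProbabilityMeasure P]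
    (T : Ω → ℝ) (hTmeas : Measurable T) (hT0 : ∀ ω, 0 ≤ T ω)
    (M α₀ : ℝ) (hM : 0 < M) (hα₀ : 0 < α₀)
    (htail : ∀ t : ℝ, 0 ≤ t → (P {ω | t ≤ T ω}).toReal ≤ M * Real.exp (-α₀ * t))
    (E : Set Ω) (hE : MeasurableSet E)
    (α : ℝ) (hα : 0 < α) (hαα₀ : α ≤ α₀ / 2) (β' : ℝ) (hβ' : 0 < β') :
    ∫ ω in E, Real.exp (α * T ω) ∂P ≤
      Real.exp β' * (P E).toReal +
        (M * Real.exp (α₀ + β') / (1 - Real.exp (-α₀ / 2))) * Real.exp (-α₀ * β' / α) :=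
  integral_exp_le_of_tail_bound_general P T hTmeas M α₀ hM hα₀ htail E α hα hαα₀ β' hβ'
end

section
/- Let G be a group and let ρ₀ : G → SL(2,ℝ) and ρ : G → SL(2,ℂ) be group homomorphisms. Assume: (i) there exists C > 0 such that log ‖ρ(g)‖ ≤ C · dist(i, ρ₀(g)•i) for every g ∈ G; and (ii) there exists c₀ > 0 such that ‖ρ₀(g)‖ ≥ 1 + c₀ for every g ∈ G with ρ₀(g) ∉ {I, −I}. Then there exists β > 0 such that ‖ρ(g)‖ ≤ ‖ρ₀(g)‖^β for every g ∈ G. -/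
/-!
For `g ∈ SL(2,ℝ)` with entries `a, b, c, d` one has `cosh d(i, g•i) = (a² + b² + c² + d²)/2`,
half the squared Frobenius norm of `g`. Since the singular values of `g` are `‖g‖` and `‖g‖⁻¹`,
this is `(‖g‖² + ‖g‖⁻²)/2 = cosh (2 log ‖g‖)`, so `d(i, g•i) = 2 log ‖g‖`. Hypothesis (i) then reads
`log ‖ρ(g)‖ ≤ 2C log ‖ρ₀(g)‖`, and since `‖ρ₀(g)‖ ≥ 1` any integer `β ≥ 2C` works.
-/

open scoped MatrixGroups Matrix.Norms.L2Operator

namespace Matrix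

theorem sq_norm_mulVec_fin_two_le (A : Matrix (Fin 2) (Fin 2) ℝ) (x y : ℝ) :
    (A 0 0 * x + A 0 1 * y) ^ 2 + (A 1 0 * x + A 1 1 * y) ^ 2 ≤ ‖A‖ ^ 2 * (x ^ 2 + y ^ 2) := by
  have h := pow_le_pow_left₀ (norm_nonneg _) (A.l2_opNorm_mulVec !₂[x, y]) 2
  rw [mul_pow, EuclideanSpace.real_norm_sq_eq, EuclideanSpace.real_norm_sq_eq] at h
  simpa [Fin.sum_univ_two, mulVec, dotProduct] using h

theorem abs_det_le_opNorm_sq_fin_two (A : Matrix (Fin 2) (Fin 2) ℝ) : |A.det| ≤ ‖A‖ ^ 2 := by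
  have h₀ := A.sq_norm_mulVec_fin_two_le 1 0
  have h₁ := A.sq_norm_mulVec_fin_two_le 0 1
  refine abs_le_of_sq_le_sq ?_ (by positivity)
  rw [det_fin_two]
  nlinarith [sq_nonneg (A 0 0 * A 0 1 + A 1 0 * A 1 1)]

theorem frobenius_mul_opNorm_sq_le_fin_two (A : Matrix (Fin 2) (Fin 2) ℝ) :
    (A 0 0 ^ 2 + A 0 1 ^ 2 + A 1 0 ^ 2 + A 1 1 ^ 2) * ‖A‖ ^ 2 ≤ ‖A‖ ^ 4 + A.det ^ 2 := by
  -- `‖A‖² - AᵀA` is positive semidefinite, so its determinant is nonnegative.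
  have hdisc : discrim (‖A‖ ^ 2 - (A 0 0 ^ 2 + A 1 0 ^ 2)) (-2 * (A 0 0 * A 0 1 + A 1 0 * A 1 1))
      (‖A‖ ^ 2 - (A 0 1 ^ 2 + A 1 1 ^ 2)) ≤ 0 :=
    discrim_le_zero fun x => by nlinarith [A.sq_norm_mulVec_fin_two_le x 1]
  rw [discrim] at hdisc
  rw [det_fin_two]
  nlinarith

theorem SpecialLinearGroup.one_le_norm_fin_two (g : SL(2, ℝ)) :
    1 ≤ ‖(g : Matrix (Fin 2) (Fin 2) ℝ)‖ := by
  have h := abs_det_le_opNorm_sq_fin_two (g : Matrix (Fin 2) (Fin 2) ℝ)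
  rwa [g.det_coe, abs_one, one_le_sq_iff₀ (norm_nonneg _)] at h

end Matrix

namespace UpperHalfPlane

theorem cosh_dist_I_smul_I (g : SL(2, ℝ)) :
    Real.cosh (dist I (g • I)) = (g 0 0 ^ 2 + g 0 1 ^ 2 + g 1 0 ^ 2 + g 1 1 ^ 2) / 2 := by
  have hdet : g 0 0 * g 1 1 - g 0 1 * g 1 0 = 1 := by
    rw [← Matrix.det_fin_two]; exact g.det_coe
  -- Lagrange's identity `(a² + b²)(c² + d²) = (ac + bd)² + (ad - bc)²` rules out `c = d = 0`.
  have hpos : 0 < g 1 0 ^ 2 + g 1 1 ^ 2 := by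
    by_contra! h
    nlinarith [sq_nonneg (g 0 0 * g 1 0 + g 0 1 * g 1 1),
      mul_le_mul_of_nonneg_left h (add_nonneg (sq_nonneg (g 0 0)) (sq_nonneg (g 0 1)))]
  have hw : ((g • I : ℍ) : ℂ) = (g 0 0 * Complex.I + g 0 1) / (g 1 0 * Complex.I + g 1 1) := by
    simp only [coe_specialLinearGroup_apply, Algebra.algebraMap_self, RingHom.id_apply, coe_I]
  have hden : Complex.normSq (g 1 0 * Complex.I + g 1 1) = g 1 0 ^ 2 + g 1 1 ^ 2 := by
    rw [add_comm, Complex.normSq_add_mul_I, add_comm]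
  have hre : (g • I).re = (g 0 0 * g 1 0 + g 0 1 * g 1 1) / (g 1 0 ^ 2 + g 1 1 ^ 2) := by
    rw [re, hw, Complex.div_re, hden]
    simp only [Complex.add_re, Complex.add_im, Complex.mul_re, Complex.mul_im, Complex.ofReal_re,
      Complex.ofReal_im, Complex.I_re, Complex.I_im]
    ring
  have him : (g • I).im = 1 / (g 1 0 ^ 2 + g 1 1 ^ 2) := by
    rw [im, hw, Complex.div_im, hden]
    simp only [Complex.add_re, Complex.add_im, Complex.mul_re, Complex.mul_im, Complex.ofReal_re,
      Complex.ofReal_im, Complex.I_re, Complex.I_im]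
    linear_combination hdet / (g 1 0 ^ 2 + g 1 1 ^ 2)
  rw [cosh_dist', hre, him, I_re, I_im]
  field_simp
  linear_combination (-(g 0 0 * g 1 1 - g 0 1 * g 1 0 + 1)) * hdet

theorem dist_I_smul_I_le (g : SL(2, ℝ)) :
    dist I (g • I) ≤ 2 * Real.log ‖(g : Matrix (Fin 2) (Fin 2) ℝ)‖ := by
  set N := ‖(g : Matrix (Fin 2) (Fin 2) ℝ)‖
  have hN : 1 ≤ N := Matrix.SpecialLinearGroup.one_le_norm_fin_two g
  have hfrob := Matrix.frobenius_mul_opNorm_sq_le_fin_two (g : Matrix (Fin 2) (Fin 2) ℝ)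
  rw [g.det_coe] at hfrob
  have hcosh : Real.cosh (dist I (g • I)) ≤ Real.cosh (Real.log (N ^ 2)) := by
    rw [cosh_dist_I_smul_I, Real.cosh_log (by positivity)]
    have hN2 : 0 < N ^ 2 := by positivity
    rw [div_le_div_iff_of_pos_right two_pos, ← le_sub_iff_add_le', ← mul_le_mul_iff_left₀ hN2]
    field_simp
    nlinarith
  rw [Real.cosh_le_cosh, abs_of_nonneg dist_nonneg,
    abs_of_nonneg (Real.log_nonneg (one_le_pow₀ hN)), Real.log_pow] at hcosh
  exact_mod_cast hcosh

end UpperHalfPlane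

theorem opNorm_le_rpow_of_lipschitz_general {G : Type*} [Group G]
    (ρ₀ : G →* SL(2, ℝ)) (ρ : G →* SL(2, ℂ))
    (h₁ : ∃ C > 0, ∀ g : G,
      Real.log ‖((ρ g : Matrix (Fin 2) (Fin 2) ℂ))‖ ≤
        C * dist UpperHalfPlane.I ((ρ₀ g) • UpperHalfPlane.I)) :
    ∃ β > 0, ∀ g : G,
      ‖(ρ g : Matrix (Fin 2) (Fin 2) ℂ)‖ ≤ ‖(ρ₀ g : Matrix (Fin 2) (Fin 2) ℝ)‖ ^ β := by
  obtain ⟨C, hC, hlog⟩ := h₁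
  refine ⟨⌈2 * C⌉₊, Nat.ceil_pos.mpr (by positivity), fun g => ?_⟩
  have hN := Matrix.SpecialLinearGroup.one_le_norm_fin_two (ρ₀ g)
  refine Real.le_pow_of_log_le (one_pos.trans_le hN) ?_
  calc Real.log ‖(ρ g : Matrix (Fin 2) (Fin 2) ℂ)‖
      ≤ C * dist UpperHalfPlane.I (ρ₀ g • UpperHalfPlane.I) := hlog g
    _ ≤ C * (2 * Real.log ‖(ρ₀ g : Matrix (Fin 2) (Fin 2) ℝ)‖) := by
      gcongr; exact UpperHalfPlane.dist_I_smul_I_le _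
    _ = 2 * C * Real.log ‖(ρ₀ g : Matrix (Fin 2) (Fin 2) ℝ)‖ := by ring
    _ ≤ ⌈2 * C⌉₊ * Real.log ‖(ρ₀ g : Matrix (Fin 2) (Fin 2) ℝ)‖ := by
      gcongr
      · exact Real.log_nonneg hN
      · exact Nat.le_ceil _

/-- If `ρ₀ : G → SL(2,ℝ)` and `ρ : G → SL(2,ℂ)` are homomorphisms such that
`log ‖ρ(g)‖ ≤ C · dist(i, ρ₀(g)•i)` for all `g`, and the operator norms of the nontrivial
elements of `ρ₀(G)` are uniformly bounded away from `1`, then there is `β > 0` with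
`‖ρ(g)‖ ≤ ‖ρ₀(g)‖^β` for all `g`. Norms are operator norms on the 2-dimensional column space. -/
theorem opNorm_le_rpow_of_lipschitz {G : Type*} [Group G]
    (ρ₀ : G →* SL(2, ℝ)) (ρ : G →* SL(2, ℂ))
    (h₁ : ∃ C > 0, ∀ g : G,
      Real.log ‖((ρ g : Matrix (Fin 2) (Fin 2) ℂ))‖ ≤
        C * dist UpperHalfPlane.I ((ρ₀ g) • UpperHalfPlane.I))
    (h₂ : ∃ c₀ > 0, ∀ g : G,
      (ρ₀ g : Matrix (Fin 2) (Fin 2) ℝ) ≠ 1 → (ρ₀ g : Matrix (Fin 2) (Fin 2) ℝ) ≠ -1 →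
        1 + c₀ ≤ ‖(ρ₀ g : Matrix (Fin 2) (Fin 2) ℝ)‖) :
    ∃ β > 0, ∀ g : G,
      ‖(ρ g : Matrix (Fin 2) (Fin 2) ℂ)‖ ≤ ‖(ρ₀ g : Matrix (Fin 2) (Fin 2) ℝ)‖ ^ β :=
  opNorm_le_rpow_of_lipschitz_general ρ₀ ρ h₁
end
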